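/- arXiv:2206.00120 — 2 statements merged into one kernel-verified Lean document; each statement's English description precedes it below -/
import Mathlib

section
/- Let $\mu_j : \mathbb{N} \to \mathbb{R}$ for $j \in [k]$ be arm-mean sequences each with drift bounded by $\delta$ per step, i.e., $|\mu_j(t+1) - \mu_j(t)| \leq \delta$. Suppose arms are pulled in round-robin over a window of $w$ time steps ending at $t$ (each arm pulled $w/k$ times, with $k \mid w$). Let $\bar\mu_{j,t}(w)$ denote the average of $\mu_j$ over the $w/k$ times arm $j$ was pulled in this window. Then for any arms $a, b$: $\bar\mu_{a,t}(w) - \bar\mu_{b,t}(w) \leq \frac{1}{w}\sum_{s=0}^{w-1}(\mu_a(t-s) - \mu_b(t-s)) + (k-1)\delta$. -/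
/-!
Reverse time, so that arm `j` is sampled at `q * k + o j` in block `q` of the window. Within a
block of `k` consecutive steps, bounded drift puts `k` times a sample within
`∑ r < k, |o j - r| * δ ≤ k (k - 1) / 2 * δ` of the block sum. Averaging over the blocks, each arm's sampled
average is within `(k - 1) / 2 * δ` of its window average, and the two arms contribute one such
error each.
-/

open Finset

theorem Nat.two_mul_sum_range_dist_le {c k : ℕ} (hc : c < k) :
    2 * ∑ r ∈ range k, c.dist r ≤ k * (k - 1) := by
  have hreflect := sum_range_reflect (fun r => c.dist r) k
  have hpair : ∀ r ∈ range k, c.dist r + c.dist (k - 1 - r) ≤ k - 1 := by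
    intro r hr
    have := mem_range.mp hr
    unfold Nat.dist
    omega
  calc 2 * ∑ r ∈ range k, c.dist r
      = ∑ r ∈ range k, (c.dist r + c.dist (k - 1 - r)) := by
        rw [sum_add_distrib, hreflect, two_mul]
    _ ≤ ∑ _r ∈ range k, (k - 1) := sum_le_sum hpair
    _ = k * (k - 1) := by rw [sum_const, card_range, smul_eq_mul]

theorem Finset.sum_range_mul_eq_sum_sum {M : Type*} [AddCommMonoid M] (f : ℕ → M) (k m : ℕ) :
    ∑ s ∈ range (k * m), f s = ∑ q ∈ range m, ∑ r ∈ range k, f (q * k + r) := by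
  induction m with
  | zero => simp
  | succ m ih =>
    rw [Nat.mul_succ, sum_range_add, ih, sum_range_succ, Nat.mul_comm k m]

section Drift

variable {f : ℕ → ℝ} {δ : ℝ}

theorem nonneg_of_abs_succ_sub_le (hf : ∀ n, |f (n + 1) - f n| ≤ δ) : 0 ≤ δ :=
  (abs_nonneg _).trans (hf 0)

theorem abs_succ_sub_le_of_tsub (t : ℕ) (hf : ∀ n, |f (n + 1) - f n| ≤ δ) (n : ℕ) :
    |f (t - (n + 1)) - f (t - n)| ≤ δ := by
  rcases lt_or_ge n t with hn | hn
  · have hsucc : t - n = t - (n + 1) + 1 := by omega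
    rw [hsucc, abs_sub_comm]
    exact hf _
  · rw [Nat.sub_eq_zero_of_le hn, Nat.sub_eq_zero_of_le (by omega), sub_self, abs_zero]
    exact nonneg_of_abs_succ_sub_le hf

theorem abs_sub_le_dist_mul_of_abs_succ_sub_le (hf : ∀ n, |f (n + 1) - f n| ≤ δ) (m n : ℕ) :
    |f m - f n| ≤ m.dist n * δ := by
  wlog hmn : m ≤ n generalizing m n
  · rw [abs_sub_comm, Nat.dist_comm]
    exact this n m (by omega)
  have hsum := dist_le_Ico_sum_of_dist_le (f := f) hmn (d := fun _ => δ) fun _ _ => by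
    rw [Real.dist_eq, abs_sub_comm]
    exact hf _
  rwa [sum_const, Nat.card_Ico, nsmul_eq_mul, ← Nat.dist_eq_sub_of_le hmn, Real.dist_eq] at hsum

theorem abs_mul_sub_sum_block_le (hf : ∀ n, |f (n + 1) - f n| ≤ δ) {c k : ℕ} (hc : c < k)
    (n : ℕ) :
    |k * f (n + c) - ∑ r ∈ range k, f (n + r)| ≤ k * (k - 1) / 2 * δ := by
  have hdist : (∑ r ∈ range k, (c.dist r : ℝ)) ≤ k * (k - 1) / 2 := by
    have := Nat.two_mul_sum_range_dist_le hc
    have hk : ((k - 1 : ℕ) : ℝ) = k - 1 := by rw [Nat.cast_sub (by omega), Nat.cast_one]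
    rw [le_div_iff₀ two_pos, ← hk]
    exact_mod_cast (mul_comm _ _).trans_le this
  calc |k * f (n + c) - ∑ r ∈ range k, f (n + r)|
      = |∑ r ∈ range k, (f (n + c) - f (n + r))| := by
        rw [sum_sub_distrib, sum_const, card_range, nsmul_eq_mul]
    _ ≤ ∑ r ∈ range k, (c.dist r : ℝ) * δ := by
        refine (abs_sum_le_sum_abs _ _).trans (sum_le_sum fun r _ => ?_)
        rw [← Nat.dist_add_add_left n c r]
        exact abs_sub_le_dist_mul_of_abs_succ_sub_le hf _ _
    _ ≤ k * (k - 1) / 2 * δ := by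
        rw [← sum_mul]
        exact mul_le_mul_of_nonneg_right hdist (nonneg_of_abs_succ_sub_le hf)

theorem abs_sampled_avg_sub_window_avg_le (hf : ∀ n, |f (n + 1) - f n| ≤ δ) {c k : ℕ}
    (hc : c < k) (m : ℕ) :
    |(∑ q ∈ range m, f (q * k + c)) / m - (∑ s ∈ range (k * m), f s) / (k * m : ℕ)|
      ≤ (k - 1) / 2 * δ := by
  have hδ := nonneg_of_abs_succ_sub_le hf
  have hk : (1 : ℝ) ≤ k := by exact_mod_cast (show 1 ≤ k by omega)
  rcases Nat.eq_zero_or_pos m with rfl | hm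
  · simp only [range_zero, sum_empty, zero_div, sub_zero, abs_zero, mul_zero]
    exact mul_nonneg (by linarith) hδ
  have hblocks : |k * ∑ q ∈ range m, f (q * k + c) - ∑ s ∈ range (k * m), f s|
      ≤ m * (k * (k - 1) / 2 * δ) := by
    rw [sum_range_mul_eq_sum_sum, mul_sum, ← sum_sub_distrib]
    refine (abs_sum_le_sum_abs _ _).trans ?_
    simpa using sum_le_sum fun q (_ : q ∈ range m) => abs_mul_sub_sum_block_le hf hc (q * k)
  have hkm : (0 : ℝ) < (k * m : ℕ) := by exact_mod_cast Nat.mul_pos (by omega) hm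
  have hrewrite : (∑ q ∈ range m, f (q * k + c)) / m - (∑ s ∈ range (k * m), f s) / (k * m : ℕ)
      = (k * ∑ q ∈ range m, f (q * k + c) - ∑ s ∈ range (k * m), f s) / (k * m : ℕ) := by
    push_cast
    field_simp
  rw [hrewrite, abs_div, abs_of_pos hkm, div_le_iff₀ hkm]
  calc _ ≤ m * (k * (k - 1) / 2 * δ) := hblocks
    _ = (k - 1) / 2 * δ * (k * m : ℕ) := by push_cast; ring

end Drift

theorem stmt_4_general (k m w t : ℕ) (hw : w = k * m) (δ : ℝ)
    (μ : Fin k → ℕ → ℝ)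
    (hdrift : ∀ j : Fin k, ∀ s : ℕ, |μ j (s + 1) - μ j s| ≤ δ)
    (o : Fin k → ℕ) (ho : ∀ j, o j < k)
    (bar : Fin k → ℝ)
    (hbar : ∀ j : Fin k,
      bar j = (1 / (m : ℝ)) * ∑ q ∈ Finset.range m, μ j (t - (q * k + o j)))
    (a b : Fin k) :
    bar a - bar b ≤
      (1 / (w : ℝ)) * ∑ s ∈ Finset.range w, (μ a (t - s) - μ b (t - s)) +
        ((k : ℝ) - 1) * δ := by
  have hrev (j : Fin k) := abs_sampled_avg_sub_window_avg_le
    (f := fun s => μ j (t - s)) (abs_succ_sub_le_of_tsub t (hdrift j)) (ho j) m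
  have ha := (abs_le.mp (hrev a)).2
  have hb := (abs_le.mp (hrev b)).1
  rw [hbar a, hbar b, hw, sum_sub_distrib]
  simp only [one_div_mul_eq_div, sub_div]
  linarith

/-- Under round-robin sampling over a window of length `w = k * m`
ending at time `t` (arm `j` pulled at times `t - (q*k + o j)`, `q < m`, with offsets
`o j < k`), and per-step drift at most `δ` on each arm, the difference of the
sampled averages of any two arms is at most the full-window average gap plus `(k-1)δ`. -/
theorem stmt_4 (k m w t : ℕ) (hk : 1 ≤ k) (hm : 1 ≤ m) (hw : w = k * m)
    (hwt : w ≤ t) (δ : ℝ) (hδ : 0 ≤ δ)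
    (μ : Fin k → ℕ → ℝ)
    (hdrift : ∀ j : Fin k, ∀ s : ℕ, |μ j (s + 1) - μ j s| ≤ δ)
    (o : Fin k → ℕ) (ho : ∀ j, o j < k)
    (bar : Fin k → ℝ)
    (hbar : ∀ j : Fin k,
      bar j = (1 / (m : ℝ)) * ∑ q ∈ Finset.range m, μ j (t - (q * k + o j)))
    (a b : Fin k) :
    bar a - bar b ≤
      (1 / (w : ℝ)) * ∑ s ∈ Finset.range w, (μ a (t - s) - μ b (t - s)) +
        ((k : ℝ) - 1) * δ :=
  stmt_4_general k m w t hw δ μ hdrift o ho bar hbar a b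
end

section
/- Consider the rank estimation protocol for $N$ agents and $k \geq N$ arms: at $t=1$ all agents pull arm 1; for $t \in [2, N-1]$, every agent not yet matched pulls arm $t$, and every matched agent repeats its matched arm. Under serial dictatorship collision resolution (the highest-ranked agent among those pulling an arm is matched to it), after $N-1$ rounds, the agent ranked $r$ is first matched at round $r$ (with agent ranked $N$ first matched at round $N-1$ or deducing its rank as the unique unmatched agent), so every agent can infer its own rank. -/
/-- Rank estimation. Agents `a : Fin N` (rank `a+1`). At round 1 all
agents pull arm 1; at any later round `t ≤ N-1`, an agent matched at some earlier
round (i.e. it was the highest-ranked agent pulling its arm) keeps pulling that arm,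
while an unmatched agent pulls arm `t`. Then every agent of rank `r ≤ N-1` is first
matched exactly at round `r`, and the agent ranked `N` is never matched in the first
`N-1` rounds (so it deduces its rank as the unique unmatched agent). -/
theorem stmt_15 (N : ℕ) (hN : 2 ≤ N)
    (pull : ℕ → Fin N → ℕ)
    (hp1 : ∀ a : Fin N, pull 1 a = 1)
    (hmatched : ∀ t, 2 ≤ t → t ≤ N - 1 → ∀ a : Fin N, ∀ s, 1 ≤ s → s < t →
      (∀ b : Fin N, pull s b = pull s a → a ≤ b) → pull t a = pull s a)
    (hunmatched : ∀ t, 2 ≤ t → t ≤ N - 1 → ∀ a : Fin N,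
      (∀ s, 1 ≤ s → s < t → ¬ (∀ b : Fin N, pull s b = pull s a → a ≤ b)) →
      pull t a = t) :
    (∀ a : Fin N, (a : ℕ) + 1 ≤ N - 1 →
      (∀ b : Fin N, pull ((a : ℕ) + 1) b = pull ((a : ℕ) + 1) a → a ≤ b) ∧
      (∀ s, 1 ≤ s → s < (a : ℕ) + 1 →
        ¬ (∀ b : Fin N, pull s b = pull s a → a ≤ b))) ∧
    (∀ a : Fin N, (a : ℕ) + 1 = N →
      ∀ s, 1 ≤ s → s ≤ N - 1 → ¬ (∀ b : Fin N, pull s b = pull s a → a ≤ b)) := by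
  have key : ∀ t, 1 ≤ t → t ≤ N - 1 → ∀ a : Fin N, pull t a = min t ((a : ℕ) + 1) := by
    intro t
    induction t using Nat.strong_induction_on with
    | _ t ih =>
      intro ht1 htN a
      rcases eq_or_lt_of_le ht1 with h1 | h2
      · subst h1
        simp [hp1 a]
      · -- t ≥ 2
        have ht2 : 2 ≤ t := h2
        by_cases hcase : (a : ℕ) + 1 < t
        · -- matched at round a+1
          have hs1 : 1 ≤ (a : ℕ) + 1 := Nat.le_add_left 1 _
          have hsN : (a : ℕ) + 1 ≤ N - 1 := le_trans (Nat.le_of_lt hcase) htN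
          have hps : ∀ b : Fin N, pull ((a : ℕ) + 1) b = min ((a : ℕ) + 1) ((b : ℕ) + 1) :=
            ih _ hcase hs1 hsN
          have hm : ∀ b : Fin N, pull ((a : ℕ) + 1) b = pull ((a : ℕ) + 1) a → a ≤ b := by
            intro b hb
            rw [hps b, hps a, min_self] at hb
            have : (a : ℕ) + 1 ≤ (b : ℕ) + 1 := by
              rcases le_or_gt ((a : ℕ) + 1) ((b : ℕ) + 1) with h | h
              · exact h
              · rw [min_eq_right (le_of_lt h)] at hb; omega
            exact Fin.le_def.mpr (by omega)
          have := hmatched t ht2 htN a ((a : ℕ) + 1) hs1 hcase hm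
          rw [this, hps a, min_self, min_eq_right (le_of_lt hcase)]
        · -- unmatched at all earlier rounds
          push_neg at hcase
          have hu : ∀ s, 1 ≤ s → s < t → ¬ (∀ b : Fin N, pull s b = pull s a → a ≤ b) := by
            intro s hs1 hst hall
            have hsN : s ≤ N - 1 := le_trans (Nat.le_of_lt hst) htN
            have hps : ∀ b : Fin N, pull s b = min s ((b : ℕ) + 1) := ih s hst hs1 hsN
            have hbN : s - 1 < N := by omega
            set b : Fin N := ⟨s - 1, hbN⟩
            have hpb : pull s b = pull s a := by
              rw [hps b, hps a]
              have : (b : ℕ) + 1 = s := by simp [b]; omega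
              rw [this, min_self, min_eq_left (by omega : s ≤ (a : ℕ) + 1)]
            have := hall b hpb
            have : (a : ℕ) ≤ (b : ℕ) := Fin.le_def.mp this
            simp [b] at this
            omega
          have := hunmatched t ht2 htN a hu
          rw [this, min_eq_left (by omega : t ≤ (a : ℕ) + 1)]
  constructor
  · intro a haN
    constructor
    · intro b hb
      have hs1 : 1 ≤ (a : ℕ) + 1 := Nat.le_add_left 1 _
      have hps : ∀ c : Fin N, pull ((a : ℕ) + 1) c = min ((a : ℕ) + 1) ((c : ℕ) + 1) :=
        key _ hs1 haN
      rw [hps b, hps a, min_self] at hb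
      have : (a : ℕ) + 1 ≤ (b : ℕ) + 1 := by
        rcases le_or_gt ((a : ℕ) + 1) ((b : ℕ) + 1) with h | h
        · exact h
        · rw [min_eq_right (le_of_lt h)] at hb; omega
      exact Fin.le_def.mpr (by omega)
    · intro s hs1 hsa hall
      have hsN : s ≤ N - 1 := by omega
      have hps : ∀ c : Fin N, pull s c = min s ((c : ℕ) + 1) := key s hs1 hsN
      have hbN : s - 1 < N := by omega
      set b : Fin N := ⟨s - 1, hbN⟩
      have hpb : pull s b = pull s a := by
        rw [hps b, hps a]
        have : (b : ℕ) + 1 = s := by simp [b]; omega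
        rw [this, min_self, min_eq_left (by omega : s ≤ (a : ℕ) + 1)]
      have := Fin.le_def.mp (hall b hpb)
      simp [b] at this
      omega
  · intro a haN s hs1 hsN hall
    have hps : ∀ c : Fin N, pull s c = min s ((c : ℕ) + 1) := key s hs1 hsN
    have hbN : s - 1 < N := by omega
    set b : Fin N := ⟨s - 1, hbN⟩
    have hpb : pull s b = pull s a := by
      rw [hps b, hps a]
      have : (b : ℕ) + 1 = s := by simp [b]; omega
      rw [this, min_self, min_eq_left (by omega : s ≤ (a : ℕ) + 1)]
    have := Fin.le_def.mp (hall b hpb)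
    simp [b] at this
    omega
end
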